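/- arXiv:2604.26304 — 2 statements merged into one kernel-verified Lean document; each statement's English description precedes it below -/
import Mathlib

section
/- For every integer m ≥ 2 and every natural number k, the PF-CME density assigns geometric mass to the k-th cell: ∫_{k·h_m}^{(k+1)·h_m} f_m(t) dt = (1 − q_m)·q_m^k, where q_m = e^{−h_m}. -/
open Real MeasureTheory

/-- The Fejér kernel of order `m`. -/
noncomputable def Fejer (m : ℕ) (θ : ℝ) : ℝ :=
  1 + 2 * ∑ ℓ ∈ Finset.Icc 1 (m - 1), (1 - (ℓ : ℝ) / m) * Real.cos ((ℓ : ℝ) * θ)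

/-- `r_m = ⌈log m⌉`. -/
noncomputable def rP (m : ℕ) : ℕ := ⌈Real.log m⌉₊

/-- `h_m = 2 log m + log log m`. -/
noncomputable def hP (m : ℕ) : ℝ := 2 * Real.log m + Real.log (Real.log m)

/-- `ω_m = 2π / h_m`. -/
noncomputable def ωP (m : ℕ) : ℝ := 2 * Real.pi / hP m

/-- `W_m = Φ_m ^ {r_m}`, the powered Fejér kernel. -/
noncomputable def WP (m : ℕ) (θ : ℝ) : ℝ := (Fejer m θ) ^ (rP m)

/-- The normalizing constant `C_m` making `∫_0^∞ f_m = 1`. -/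
noncomputable def CP (m : ℕ) : ℝ :=
  (∫ t in Set.Ioi (0 : ℝ), Real.exp (-t) * WP m (ωP m * (t - 1)))⁻¹

/-- The PF-CME density `f_m(t) = C_m e^{-t} W_m(ω_m (t-1))`. -/
noncomputable def fP (m : ℕ) (t : ℝ) : ℝ := CP m * Real.exp (-t) * WP m (ωP m * (t - 1))

/-- Fourier coefficients of the Fejér kernel: `γ_k = max(1 - |k|/m, 0)`. -/
noncomputable def fejerCoeff (m : ℕ) (k : ℤ) : ℝ := max (1 - |(k : ℝ)| / m) 0

/-- Discrete convolution of two (absolutely summable) sequences on `ℤ`. -/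
noncomputable def conv (f g : ℤ → ℝ) (k : ℤ) : ℝ := ∑' j : ℤ, f j * g (k - j)

/-- `r`-fold discrete convolution of a sequence on `ℤ`
(with the convention that the `0`-fold convolution is the unit `δ_0`). -/
noncomputable def convPow (f : ℤ → ℝ) : ℕ → ℤ → ℝ
  | 0 => fun k => if k = 0 then 1 else 0
  | n + 1 => conv f (convPow f n)

/-- `B_{ℓ,m}`: the `ℓ`-th coefficient of the `r_m`-fold discrete convolution of `γ`. -/
noncomputable def BP (m : ℕ) (ℓ : ℤ) : ℝ := convPow (fejerCoeff m) (rP m) ℓ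

/-- `L_m = r_m (m - 1)`. -/
noncomputable def LP (m : ℕ) : ℕ := rP m * (m - 1)

/-!
Since `W_m` is `2π`-periodic and `ω_m h_m = 2π`, the unnormalized density
`g(t) = e^{-t} W_m(ω_m (t - 1))` satisfies `g(t + h_m) = q_m g(t)`. Translating by `h_m` gives
`∫_{k h_m}^{(k+1) h_m} g = q_m^k ∫_0^{h_m} g`, and splitting `∫_0^∞ g = ∫_0^{h_m} g + q_m ∫_0^∞ g`
gives `∫_0^{h_m} g = (1 - q_m) ∫_0^∞ g = (1 - q_m) / C_m`. The normalizing integral is positive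
because `Φ_m ≥ 0` (as `m Φ_m(θ) = |∑_{j<m} e^{ijθ}|²`) and `Φ_m(0) ≥ 1`.
-/

open Finset Function Set

theorem sum_cos_sq_add_sum_sin_sq (m : ℕ) (θ : ℝ) :
    (∑ j ∈ range m, cos (j * θ)) ^ 2 + (∑ j ∈ range m, sin (j * θ)) ^ 2 =
      2 * ∑ ℓ ∈ range m, ((m : ℝ) - ℓ) * cos (ℓ * θ) - m := by
  induction m with
  | zero => simp
  | succ m ih =>
    have cross : (∑ j ∈ range m, cos (j * θ)) * cos (m * θ) +
        (∑ j ∈ range m, sin (j * θ)) * sin (m * θ) = ∑ j ∈ range m, cos ((j + 1 : ℕ) * θ) := by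
      rw [← sum_range_reflect (fun j => cos ((j + 1 : ℕ) * θ)), sum_mul, sum_mul,
        ← sum_add_distrib]
      refine sum_congr rfl fun j hj => ?_
      have hjm := mem_range.1 hj
      rw [mul_comm, mul_comm (sin _), ← cos_sub, ← sub_mul, show m - 1 - j + 1 = m - j by omega,
        Nat.cast_sub hjm.le]
    have hcos : ∑ j ∈ range m, cos (j * θ) + cos (m * θ) =
        1 + ∑ j ∈ range m, cos ((j + 1 : ℕ) * θ) := by
      rw [← sum_range_succ, sum_range_succ', add_comm]
      simp
    have hweights : ∑ ℓ ∈ range m, ((m + 1 : ℕ) - (ℓ : ℝ)) * cos (ℓ * θ) =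
        ∑ ℓ ∈ range m, ((m : ℝ) - ℓ) * cos (ℓ * θ) + ∑ ℓ ∈ range m, cos (ℓ * θ) := by
      rw [← sum_add_distrib]
      exact sum_congr rfl fun ℓ _ => by push_cast; ring
    rw [sum_range_succ, sum_range_succ, sum_range_succ, hweights]
    push_cast
    linear_combination ih + 2 * cross + sin_sq_add_cos_sq ((m : ℝ) * θ) - 2 * hcos

theorem mul_fejer_eq {m : ℕ} (hm : 0 < m) (θ : ℝ) :
    m * Fejer m θ = 2 * ∑ ℓ ∈ range m, ((m : ℝ) - ℓ) * cos (ℓ * θ) - m := by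
  obtain ⟨n, rfl⟩ := Nat.exists_eq_add_one_of_ne_zero hm.ne'
  have hIcc : ∑ ℓ ∈ Icc 1 n, (1 - (ℓ : ℝ) / (n + 1 : ℕ)) * cos (ℓ * θ) =
      ∑ ℓ ∈ range n, (1 - ((ℓ + 1 : ℕ) : ℝ) / (n + 1 : ℕ)) * cos ((ℓ + 1 : ℕ) * θ) := by
    rw [range_eq_Ico, sum_Ico_add' (fun ℓ : ℕ => (1 - (ℓ : ℝ) / (n + 1 : ℕ)) * cos (ℓ * θ))]
    rfl
  have hweights : ((n + 1 : ℕ) : ℝ) *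
      ∑ ℓ ∈ range n, (1 - ((ℓ + 1 : ℕ) : ℝ) / (n + 1 : ℕ)) * cos ((ℓ + 1 : ℕ) * θ) =
      ∑ ℓ ∈ range n, (((n + 1 : ℕ) : ℝ) - (ℓ + 1 : ℕ)) * cos ((ℓ + 1 : ℕ) * θ) := by
    rw [mul_sum]
    exact sum_congr rfl fun ℓ _ => by field_simp
  rw [Fejer, Nat.add_sub_cancel, hIcc, sum_range_succ']
  simp only [Nat.cast_zero, zero_mul, cos_zero, sub_zero]
  linear_combination 2 * hweights

theorem fejer_nonneg (m : ℕ) (θ : ℝ) : 0 ≤ Fejer m θ := by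
  rcases m.eq_zero_or_pos with rfl | hm
  · simp [Fejer]
  refine nonneg_of_mul_nonneg_right ?_ (Nat.cast_pos.2 hm)
  rw [mul_fejer_eq hm, ← sum_cos_sq_add_sum_sin_sq]
  positivity

theorem one_le_fejer_zero (m : ℕ) : 1 ≤ Fejer m 0 := by
  have hsum : 0 ≤ ∑ ℓ ∈ Finset.Icc 1 (m - 1), (1 - (ℓ : ℝ) / m) * cos (ℓ * 0) :=
    sum_nonneg fun ℓ hℓ => by
      rw [mul_zero, cos_zero, mul_one, sub_nonneg]
      exact div_le_one_of_le₀ (mod_cast (mem_Icc.1 hℓ).2.trans (Nat.sub_le m 1)) m.cast_nonneg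
  rw [Fejer]
  linarith

theorem continuous_fejer (m : ℕ) : Continuous (Fejer m) := by
  unfold Fejer
  fun_prop

theorem periodic_fejer (m : ℕ) : Periodic (Fejer m) (2 * π) := fun θ => by
  simp only [Fejer, mul_add, cos_add_nat_mul_two_pi]

theorem continuous_WP (m : ℕ) : Continuous (WP m) :=
  (continuous_fejer m).pow _

theorem periodic_WP (m : ℕ) : Periodic (WP m) (2 * π) :=
  (periodic_fejer m).comp (· ^ rP m)

theorem WP_nonneg (m : ℕ) (θ : ℝ) : 0 ≤ WP m θ :=
  pow_nonneg (fejer_nonneg m θ) _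

theorem exists_abs_WP_le (m : ℕ) : ∃ B, ∀ θ, |WP m θ| ≤ B := by
  obtain ⟨B, hB⟩ := isBounded_iff_forall_norm_le.1
    ((periodic_WP m).isBounded_of_continuous two_pi_pos.ne' (continuous_WP m))
  exact ⟨B, fun θ => hB _ ⟨θ, rfl⟩⟩

section QuasiPeriodic

variable {g : ℝ → ℝ} {h c : ℝ}

theorem integral_cell_eq_pow_mul (hg : ∀ t, g (t + h) = c * g t) (k : ℕ) :
    ∫ t in k * h..(k + 1) * h, g t = c ^ k * ∫ t in 0..h, g t := by
  induction k with
  | zero => simp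
  | succ k ih =>
    have hshift : ∫ t in (k + 1 : ℕ) * h..((k + 1 : ℕ) + 1) * h, g t =
        ∫ t in k * h..(k + 1) * h, g (t + h) := by
      rw [intervalIntegral.integral_comp_add_right]
      push_cast
      ring_nf
    simp_rw [hshift, hg, intervalIntegral.integral_const_mul, ih, pow_succ]
    ring

theorem integral_Ioi_add_eq_mul (hg : ∀ t, g (t + h) = c * g t) (a : ℝ) :
    ∫ t in Ioi (a + h), g t = c * ∫ t in Ioi a, g t := by
  rw [← image_add_const_Ioi, (measurePreserving_add_right volume h).setIntegral_image_emb
    (measurableEmbedding_addRight h)]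
  simp_rw [hg]
  exact integral_const_mul c _

theorem integral_interval_eq_one_sub_mul (hg : ∀ t, g (t + h) = c * g t) {a : ℝ}
    (ha : IntegrableOn g (Ioi a)) (hah : IntegrableOn g (Ioi (a + h))) :
    ∫ t in a..a + h, g t = (1 - c) * ∫ t in Ioi a, g t := by
  rw [← intervalIntegral.integral_Ioi_sub_Ioi' ha hah, integral_Ioi_add_eq_mul hg]
  ring

end QuasiPeriodic

theorem Continuous.setIntegral_pos_of_isOpen {α : Type*} [TopologicalSpace α] [MeasurableSpace α]
    [OpensMeasurableSpace α] {μ : Measure α} [μ.IsOpenPosMeasure] {g : α → ℝ} {s : Set α} {x : α}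
    (hg : Continuous g) (hs : IsOpen s) (hnn : ∀ t ∈ s, 0 ≤ g t) (hint : IntegrableOn g s μ)
    (hx : x ∈ s) (hgx : g x ≠ 0) : 0 < ∫ t in s, g t ∂μ :=
  (setIntegral_pos_iff_support_of_nonneg_ae (ae_restrict_of_forall_mem hs.measurableSet hnn)
    hint).2 <| (hg.isOpen_support.inter hs).measure_pos μ ⟨x, hgx, hx⟩

noncomputable def unnormalizedDensity (m : ℕ) (t : ℝ) : ℝ :=
  exp (-t) * WP m (ωP m * (t - 1))

theorem fP_eq_CP_mul (m : ℕ) (t : ℝ) : fP m t = CP m * unnormalizedDensity m t :=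
  mul_assoc _ _ _

theorem CP_eq_inv (m : ℕ) : CP m = (∫ t in Ioi 0, unnormalizedDensity m t)⁻¹ := rfl

theorem continuous_unnormalizedDensity (m : ℕ) : Continuous (unnormalizedDensity m) := by
  unfold unnormalizedDensity
  have := continuous_WP m
  fun_prop

theorem unnormalizedDensity_add_hP (m : ℕ) (t : ℝ) :
    unnormalizedDensity m (t + hP m) = exp (-hP m) * unnormalizedDensity m t := by
  have hperiod : Periodic (fun t => WP m (ωP m * (t - 1))) (hP m) := by
    have := ((periodic_WP m).const_mul (ωP m)).sub_const 1
    rwa [ωP, inv_div, div_mul_cancel₀ _ two_pi_pos.ne'] at this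
  have hW : WP m (ωP m * (t + hP m - 1)) = WP m (ωP m * (t - 1)) := hperiod t
  rw [unnormalizedDensity, unnormalizedDensity, neg_add, exp_add, hW]
  ring

theorem integrableOn_unnormalizedDensity (m : ℕ) (a : ℝ) :
    IntegrableOn (unnormalizedDensity m) (Ioi a) := by
  obtain ⟨B, hB⟩ := exists_abs_WP_le m
  refine (integrableOn_exp_neg_Ioi a).mul_bdd (c := B) ?_ (.of_forall fun t => hB _)
  exact ((continuous_WP m).comp (by fun_prop)).aestronglyMeasurable

theorem integral_unnormalizedDensity_pos (m : ℕ) : 0 < ∫ t in Ioi 0, unnormalizedDensity m t := by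
  refine (continuous_unnormalizedDensity m).setIntegral_pos_of_isOpen isOpen_Ioi
    (fun t _ => mul_nonneg (exp_pos _).le (WP_nonneg m _)) (integrableOn_unnormalizedDensity m 0)
    (mem_Ioi.2 one_pos) ?_
  have := one_le_fejer_zero m
  simp only [unnormalizedDensity, sub_self, mul_zero, WP]
  positivity

theorem pfcme_geometric_cell_mass_general (m : ℕ) (k : ℕ) :
    ∫ t in ((k : ℝ) * hP m)..(((k : ℝ) + 1) * hP m), fP m t =
      (1 - Real.exp (-hP m)) * (Real.exp (-hP m)) ^ k := by
  have hshift := unnormalizedDensity_add_hP m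
  have hcell := integral_cell_eq_pow_mul hshift k
  have hperiod := integral_interval_eq_one_sub_mul hshift
    (integrableOn_unnormalizedDensity m 0) (integrableOn_unnormalizedDensity m (0 + hP m))
  rw [zero_add] at hperiod
  simp_rw [fP_eq_CP_mul, intervalIntegral.integral_const_mul, hcell, hperiod, CP_eq_inv]
  field_simp [(integral_unnormalizedDensity_pos m).ne']

theorem pfcme_geometric_cell_mass (m : ℕ) (hm : 2 ≤ m) (k : ℕ) :
    ∫ t in ((k : ℝ) * hP m)..(((k : ℝ) + 1) * hP m), fP m t =
      (1 - Real.exp (-hP m)) * (Real.exp (-hP m)) ^ k :=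
  pfcme_geometric_cell_mass_general m k
end

section
/- There exist constants 0 < a_1 < a_2 < ∞ and an integer m_0 such that for all m ≥ m_0 and all real x with |x| ≤ 5/m, the Fejér kernel satisfies m·e^{−a_2·m²·x²} ≤ Φ_m(x) ≤ m·e^{−a_1·m²·x²}. -/
/-!
Telescoping gives `(1 - cos x) · m Φ_m(x) = 1 - cos (m x)`, which after division, and by
continuity at `x = 0`, becomes `Φ_m(x) = m · (sinc (m x / 2) / sinc (x / 2))²`.
For `|t| ≤ 5/2` the identity `sinc t = sinc (t/2) · cos (t/2)`, together with `cos ≤ sinc ≤ 1`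
near `0`, squeezes `sinc t` between `cos (t/2)²` and `cos (t/2)`, hence between two Gaussians.
The denominator `sinc (x / 2)²` costs at most a factor `exp (3 x² / 4)`, which for `m ≥ 10` is a
small part of the Gaussian decay `exp (-m² x² / (4 π²))` of the numerator.
-/

open Real

open Finset

theorem one_sub_cos_mul_dirichlet (n : ℕ) (x : ℝ) :
    (1 - cos x) * (1 + 2 * ∑ ℓ ∈ Icc 1 n, cos (ℓ * x)) = cos (n * x) - cos ((n + 1) * x) := by
  induction n with
  | zero => simp
  | succ n ih =>
    have h₁ : cos ((n + 1 + 1) * x) = cos ((n + 1) * x + x) := by ring_nf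
    have h₂ : cos (n * x) = cos ((n + 1) * x - x) := by ring_nf
    rw [sum_Icc_succ_top (by omega), mul_add 2, ← add_assoc, mul_add, ih]
    push_cast
    rw [h₁, h₂, cos_add, cos_sub]
    ring

theorem natCast_mul_fejer (m : ℕ) (x : ℝ) :
    m * Fejer m x = m + 2 * ∑ ℓ ∈ Icc 1 m, (m - ℓ : ℝ) * cos (ℓ * x) := by
  cases m with
  | zero => simp
  | succ n =>
    rw [Fejer, Nat.add_sub_cancel, sum_Icc_succ_top (by omega), mul_add, mul_left_comm, mul_sum]
    push_cast
    simp only [sub_self, zero_mul, add_zero]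
    congr 2
    · ring
    · refine sum_congr rfl fun ℓ _ => ?_
      field_simp

theorem one_sub_cos_mul_natCast_mul_fejer (m : ℕ) (x : ℝ) :
    (1 - cos x) * (m * Fejer m x) = 1 - cos (m * x) := by
  induction m with
  | zero => simp
  | succ m ih =>
    have hstep : ((m + 1 : ℕ) : ℝ) * Fejer (m + 1) x
        = m * Fejer m x + (1 + 2 * ∑ ℓ ∈ Icc 1 m, cos (ℓ * x)) := by
      rw [natCast_mul_fejer, natCast_mul_fejer, sum_Icc_succ_top (by omega)]
      have hsum : ∑ ℓ ∈ Icc 1 m, ((m : ℝ) + 1 - ℓ) * cos (ℓ * x)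
          = ∑ ℓ ∈ Icc 1 m, ((m : ℝ) - ℓ) * cos (ℓ * x) + ∑ ℓ ∈ Icc 1 m, cos (ℓ * x) := by
        rw [← sum_add_distrib]
        exact sum_congr rfl fun _ _ => by ring
      push_cast
      rw [sub_self, zero_mul, add_zero, hsum]
      ring
    rw [hstep, mul_add, ih, one_sub_cos_mul_dirichlet]
    push_cast
    ring

theorem sin_eq_mul_sinc (x : ℝ) : sin x = x * sinc x := by
  rcases eq_or_ne x 0 with rfl | hx
  · simp
  · rw [sinc_of_ne_zero hx, mul_div_cancel₀ _ hx]

theorem one_sub_cos_eq_mul_sinc_sq (x : ℝ) : 1 - cos x = x ^ 2 / 2 * sinc (x / 2) ^ 2 := by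
  have h := sin_sq_eq_half_sub (x / 2)
  rw [sin_eq_mul_sinc, mul_div_cancel₀ x two_ne_zero] at h
  linear_combination -2 * h

theorem sinc_eq_sinc_half_mul_cos_half (x : ℝ) : sinc x = sinc (x / 2) * cos (x / 2) := by
  rcases eq_or_ne x 0 with rfl | hx
  · simp
  · rw [sinc_of_ne_zero hx, sinc_of_ne_zero (div_ne_zero hx two_ne_zero)]
    conv_lhs => rw [← mul_div_cancel₀ x two_ne_zero, sin_two_mul]
    field_simp

theorem cos_le_sinc {x : ℝ} (hx : |x| < π / 2) : cos x ≤ sinc x := by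
  wlog hx₀ : 0 < x generalizing x
  · rcases eq_or_lt_of_le (not_lt.1 hx₀) with rfl | hneg
    · simp
    · simpa [sinc_neg] using this (x := -x) (by rwa [abs_neg]) (by linarith)
  have hcos : 0 < cos x :=
    cos_pos_of_mem_Ioo ⟨by linarith [neg_abs_le x], (le_abs_self x).trans_lt hx⟩
  have htan := le_tan hx₀.le ((le_abs_self x).trans_lt hx)
  rw [tan_eq_sin_div_cos, le_div_iff₀ hcos] at htan
  rw [sinc_of_ne_zero hx₀.ne', le_div_iff₀ hx₀]
  linarith

theorem cos_half_nonneg {x : ℝ} (hx : |x| ≤ π) : 0 ≤ cos (x / 2) :=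
  cos_nonneg_of_mem_Icc (abs_le.1 (by rw [abs_div, abs_two]; linarith))

theorem cos_half_sq_le_sinc {x : ℝ} (hx : |x| < π) : cos (x / 2) ^ 2 ≤ sinc x := by
  rw [sinc_eq_sinc_half_mul_cos_half, sq]
  exact mul_le_mul_of_nonneg_right (cos_le_sinc (by rw [abs_div, abs_two]; linarith))
    (cos_half_nonneg hx.le)

theorem sinc_le_cos_half {x : ℝ} (hx : |x| ≤ π) : sinc x ≤ cos (x / 2) := by
  rw [sinc_eq_sinc_half_mul_cos_half]
  exact mul_le_of_le_one_left (cos_half_nonneg hx) (sinc_le_one _)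

theorem exp_neg_div_one_sub_le_one_sub {v : ℝ} (hv : v < 1) : exp (-(v / (1 - v))) ≤ 1 - v := by
  have h1 : 0 < 1 - v := by linarith
  rw [exp_neg, inv_le_comm₀ (exp_pos _) h1]
  calc (1 - v)⁻¹ = v / (1 - v) + 1 := by field_simp; ring
    _ ≤ exp (v / (1 - v)) := add_one_le_exp _

theorem cos_le_exp_neg_mul_sq {x : ℝ} (hx : |x| ≤ π) : cos x ≤ exp (-(2 / π ^ 2 * x ^ 2)) :=
  (cos_le_one_sub_mul_cos_sq hx).trans (by linarith [add_one_le_exp (-(2 / π ^ 2 * x ^ 2))])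

theorem exp_neg_three_mul_sq_le_cos {x : ℝ} (hx : x ^ 2 ≤ 5 / 3) : exp (-(3 * x ^ 2)) ≤ cos x := by
  have hv : x ^ 2 / 2 < 1 := by linarith
  calc exp (-(3 * x ^ 2)) ≤ exp (-(x ^ 2 / 2 / (1 - x ^ 2 / 2))) := by
        gcongr
        rw [div_le_iff₀ (by linarith)]
        nlinarith [sq_nonneg x]
    _ ≤ 1 - x ^ 2 / 2 := exp_neg_div_one_sub_le_one_sub hv
    _ ≤ cos x := one_sub_sq_div_two_le_cos

theorem exp_neg_le_sinc {x : ℝ} (hx : |x| ≤ 5 / 2) : exp (-(3 / 2 * x ^ 2)) ≤ sinc x := by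
  have hπ := pi_gt_three
  have hx2 : (x / 2) ^ 2 ≤ 5 / 3 := by
    rw [div_pow, ← sq_abs]
    nlinarith [abs_nonneg x]
  calc exp (-(3 / 2 * x ^ 2)) = exp (-(3 * (x / 2) ^ 2)) ^ 2 := by rw [← exp_nat_mul]; ring_nf
    _ ≤ cos (x / 2) ^ 2 := by gcongr; exact exp_neg_three_mul_sq_le_cos hx2
    _ ≤ sinc x := cos_half_sq_le_sinc (by linarith)

theorem sinc_le_exp_neg {x : ℝ} (hx : |x| ≤ π) : sinc x ≤ exp (-(x ^ 2 / (2 * π ^ 2))) := by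
  calc sinc x ≤ cos (x / 2) := sinc_le_cos_half hx
    _ ≤ exp (-(2 / π ^ 2 * (x / 2) ^ 2)) :=
        cos_le_exp_neg_mul_sq (by rw [abs_div, abs_two]; linarith [pi_pos])
    _ = exp (-(x ^ 2 / (2 * π ^ 2))) := by ring_nf

theorem sinc_half_sq_mul_fejer {m : ℕ} (hm : m ≠ 0) (x : ℝ) :
    sinc (x / 2) ^ 2 * Fejer m x = m * sinc (m * x / 2) ^ 2 := by
  suffices (fun x ↦ sinc (x / 2) ^ 2 * Fejer m x) = fun x ↦ m * sinc (m * x / 2) ^ 2 from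
    congrFun this x
  refine Continuous.ext_on (dense_compl_singleton 0) ?_ ?_ fun y (hy : y ≠ 0) ↦ ?_
  · exact ((continuous_sinc.comp (by fun_prop)).pow 2).mul (by unfold Fejer; fun_prop)
  · exact continuous_const.mul ((continuous_sinc.comp (by fun_prop)).pow 2)
  have h := one_sub_cos_mul_natCast_mul_fejer m y
  rw [one_sub_cos_eq_mul_sinc_sq, one_sub_cos_eq_mul_sinc_sq] at h
  have hne : y ^ 2 / 2 * m ≠ 0 := by positivity
  apply mul_left_cancel₀ hne
  linear_combination h

theorem fejer_gaussian_bounds {m : ℕ} (hm : 10 ≤ m) {x : ℝ} (hx : |x| ≤ 5 / m) :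
    m * exp (-(3 / 4 * m ^ 2 * x ^ 2)) ≤ Fejer m x ∧
      Fejer m x ≤ m * exp (-(1 / 100 * m ^ 2 * x ^ 2)) := by
  have hm' : (10 : ℝ) ≤ m := by exact_mod_cast hm
  have hmx : m * |x| ≤ 5 := by rwa [le_div_iff₀ (by positivity), mul_comm] at hx
  have ht : |m * x / 2| ≤ 5 / 2 := by
    rw [abs_div, abs_two, abs_mul, Nat.abs_cast]; linarith
  have hu : |x / 2| ≤ 5 / 2 := by
    rw [abs_div, abs_two]; nlinarith [abs_nonneg x]
  have hsinc_u : 0 < sinc (x / 2) := (exp_pos _).trans_le (exp_neg_le_sinc hu)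
  have hFejer : Fejer m x = m * sinc (m * x / 2) ^ 2 / sinc (x / 2) ^ 2 := by
    rw [eq_div_iff (by positivity), mul_comm, sinc_half_sq_mul_fejer (by omega)]
  rw [hFejer]
  constructor
  · calc m * exp (-(3 / 4 * m ^ 2 * x ^ 2)) = m * exp (-(3 / 2 * (m * x / 2) ^ 2)) ^ 2 := by
          rw [← exp_nat_mul]; ring_nf
      _ ≤ m * sinc (m * x / 2) ^ 2 := by gcongr; exact exp_neg_le_sinc ht
      _ ≤ m * sinc (m * x / 2) ^ 2 / sinc (x / 2) ^ 2 :=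
          le_div_self (by positivity) (by positivity) (pow_le_one₀ hsinc_u.le (sinc_le_one _))
  · have hsinc_t : 0 ≤ sinc (m * x / 2) := (exp_pos _).le.trans (exp_neg_le_sinc ht)
    have hπ : π ^ 2 ≤ 10 := by nlinarith [pi_pos, pi_lt_d2]
    calc m * sinc (m * x / 2) ^ 2 / sinc (x / 2) ^ 2
        ≤ m * exp (-((m * x / 2) ^ 2 / (2 * π ^ 2))) ^ 2 / exp (-(3 / 2 * (x / 2) ^ 2)) ^ 2 := by
          gcongr
          · exact sinc_le_exp_neg (by linarith [pi_gt_three])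
          · exact exp_neg_le_sinc hu
      _ = m * exp (-((m * x) ^ 2 / (4 * π ^ 2) - 3 / 4 * x ^ 2)) := by
          rw [← exp_nat_mul, ← exp_nat_mul, mul_div_assoc, ← exp_sub]; ring_nf
      _ ≤ m * exp (-(1 / 100 * m ^ 2 * x ^ 2)) := by
          have hπ_div : (m * x) ^ 2 / 40 ≤ (m * x) ^ 2 / (4 * π ^ 2) := by
            gcongr; linarith
          have hm2 : 100 * x ^ 2 ≤ m ^ 2 * x ^ 2 := by gcongr; nlinarith
          gcongr
          nlinarith

theorem fejer_peak_gaussian_bounds :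
    ∃ a₁ a₂ : ℝ, 0 < a₁ ∧ a₁ < a₂ ∧
      ∃ m₀ : ℕ, ∀ m : ℕ, m₀ ≤ m → ∀ x : ℝ, |x| ≤ 5 / m →
        (m : ℝ) * Real.exp (-(a₂ * m ^ 2 * x ^ 2)) ≤ Fejer m x ∧
        Fejer m x ≤ (m : ℝ) * Real.exp (-(a₁ * m ^ 2 * x ^ 2)) :=
  ⟨1 / 100, 3 / 4, by norm_num, by norm_num, 10, fun _ hm _ hx ↦ fejer_gaussian_bounds hm hx⟩
end
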